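/- The convex hull of the set {(x₁, x₁², y₁) ∈ ℝ³ : 0 ≤ x₁ ≤ y₁ and y₁ ∈ {0,1}} equals the set {(x₁, X₁₁, y₁) ∈ ℝ³ : (x₁, X₁₁, y₁) ∈ PER and y₁ ≤ 1}. -/
import Mathlib


/-- The perspective cone PER = {(a, b, c) : a² ≤ b·c, 0 ≤ b ≤ a ≤ c}. -/
def PER : Set (ℝ × ℝ × ℝ) :=
  {p | p.1 ^ 2 ≤ p.2.1 * p.2.2 ∧ 0 ≤ p.2.1 ∧ p.2.1 ≤ p.1 ∧ p.1 ≤ p.2.2}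

lemma key_ineq (a1 b1 c1 a2 b2 c2 s t : ℝ)
    (hq1 : a1^2 ≤ b1*c1) (hb1 : 0 ≤ b1) (hba1 : b1 ≤ a1) (hac1 : a1 ≤ c1)
    (hq2 : a2^2 ≤ b2*c2) (hb2 : 0 ≤ b2) (hba2 : b2 ≤ a2) (hac2 : a2 ≤ c2)
    (hs : 0 ≤ s) (ht : 0 ≤ t) :
    (s*a1 + t*a2)^2 ≤ (s*b1 + t*b2) * (s*c1 + t*c2) := by
  have hc1 : 0 ≤ c1 := le_trans (le_trans hb1 hba1) hac1
  have hc2 : 0 ≤ c2 := le_trans (le_trans hb2 hba2) hac2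
  have h2 : 2*(a1*a2) ≤ b1*c2 + b2*c1 := by
    nlinarith [sq_nonneg (b1*c2 - b2*c1), sq_nonneg (b1*c2 + b2*c1 - 2*a1*a2),
      mul_nonneg hb1 hc2, mul_nonneg hb2 hc1, mul_nonneg (mul_nonneg hb1 hc2) (mul_nonneg hb2 hc1),
      sq_nonneg (a1*a2), mul_le_mul hq1 hq2 (sq_nonneg a2) (mul_nonneg hb1 hc1)]
  nlinarith [mul_nonneg (mul_nonneg hs ht) (sub_nonneg.2 h2), sq_nonneg s, sq_nonneg t,
    mul_nonneg (mul_nonneg hs hs) (sub_nonneg.2 hq1),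
    mul_nonneg (mul_nonneg ht ht) (sub_nonneg.2 hq2)]

/-- The convex hull of {(x₁, x₁², y₁) : 0 ≤ x₁ ≤ y₁, y₁ ∈ {0,1}} equals
{(x₁, X₁₁, y₁) ∈ PER : y₁ ≤ 1}. -/
theorem stmt0 :
    convexHull ℝ {p : ℝ × ℝ × ℝ | ∃ x₁ y₁ : ℝ,
        0 ≤ x₁ ∧ x₁ ≤ y₁ ∧ (y₁ = 0 ∨ y₁ = 1) ∧ p = (x₁, x₁ ^ 2, y₁)} =
      {p : ℝ × ℝ × ℝ | p ∈ PER ∧ p.2.2 ≤ 1} := by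
  set S : Set (ℝ × ℝ × ℝ) := {p : ℝ × ℝ × ℝ | ∃ x₁ y₁ : ℝ,
        0 ≤ x₁ ∧ x₁ ≤ y₁ ∧ (y₁ = 0 ∨ y₁ = 1) ∧ p = (x₁, x₁ ^ 2, y₁)} with hSdef
  apply Set.Subset.antisymm
  · apply convexHull_min
    · rintro p ⟨x, y, hx0, hxy, hy, rfl⟩
      rcases hy with rfl | rfl
      · have hx : x = 0 := le_antisymm hxy hx0
        subst hx
        exact ⟨⟨by norm_num, by norm_num, by norm_num, by norm_num⟩, by norm_num⟩
      · refine ⟨⟨?_, ?_, ?_, ?_⟩, le_refl 1⟩ <;> dsimp only <;> nlinarith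
    · rintro ⟨a1, b1, c1⟩ ⟨⟨hq1, hb1, hba1, hac1⟩, hc1⟩ ⟨a2, b2, c2⟩ ⟨⟨hq2, hb2, hba2, hac2⟩, hc2⟩
        s t hs ht hst
      refine ⟨⟨?_, ?_, ?_, ?_⟩, ?_⟩
      · exact key_ineq a1 b1 c1 a2 b2 c2 s t hq1 hb1 hba1 hac1 hq2 hb2 hba2 hac2 hs ht
      · simp only [Prod.smul_def, Prod.mk_add_mk, smul_eq_mul]
        positivity
      · simp only [Prod.smul_def, Prod.mk_add_mk, smul_eq_mul]
        nlinarith [mul_le_mul_of_nonneg_left hba1 hs, mul_le_mul_of_nonneg_left hba2 ht]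
      · simp only [Prod.smul_def, Prod.mk_add_mk, smul_eq_mul]
        nlinarith [mul_le_mul_of_nonneg_left hac1 hs, mul_le_mul_of_nonneg_left hac2 ht]
      · simp only [Prod.smul_def, Prod.mk_add_mk, smul_eq_mul]
        nlinarith [mul_le_mul_of_nonneg_left hc1 hs, mul_le_mul_of_nonneg_left hc2 ht]
  · rintro ⟨a, b, c⟩ ⟨⟨hq, hb, hba, hac⟩, hc1⟩
    dsimp only at hq hb hba hac hc1
    have hS : Convex ℝ (convexHull ℝ S) := convex_convexHull ℝ S
    have memO : ((0:ℝ), (0:ℝ), (0:ℝ)) ∈ convexHull ℝ S :=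
      subset_convexHull ℝ S ⟨0, 0, le_refl 0, le_refl 0, Or.inl rfl, by norm_num⟩
    have memP : ((0:ℝ), (0:ℝ), (1:ℝ)) ∈ convexHull ℝ S :=
      subset_convexHull ℝ S ⟨0, 1, le_refl 0, zero_le_one, Or.inr rfl, by norm_num⟩
    have memQ : ∀ u : ℝ, 0 ≤ u → u ≤ 1 → ((u:ℝ), u^2, (1:ℝ)) ∈ convexHull ℝ S :=
      fun u h0 h1 => subset_convexHull ℝ S ⟨u, 1, h0, h1, Or.inr rfl, rfl⟩
    have hc0 : 0 ≤ c := le_trans (le_trans hb hba) hac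
    rcases eq_or_lt_of_le hc0 with hc | hc
    · have ha : a = 0 := le_antisymm (hc ▸ hac) (le_trans hb hba)
      have hb0 : b = 0 := le_antisymm (ha ▸ hba) hb
      have : ((a:ℝ), b, c) = ((0:ℝ), 0, 0) := by rw [ha, hb0, ← hc]
      rw [this]; exact memO
    · rcases eq_or_lt_of_le (le_trans hb hba) with ha | ha
      · -- a = 0, hence b = 0
        have hb0 : b = 0 := le_antisymm (ha ▸ hba) hb
        have hcomb := hS memO memP (by linarith : (0:ℝ) ≤ 1 - c) hc0 (by ring)
        have : ((a:ℝ), b, c) = (1 - c) • ((0:ℝ), 0, 0) + c • ((0:ℝ), 0, 1) := by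
          simp [Prod.ext_iff, ← ha, hb0]
        rw [this]; exact hcomb
      · -- a > 0, hence b > 0
        have hbpos : 0 < b := by nlinarith
        set u : ℝ := b / a with hu
        have hu0 : 0 ≤ u := le_of_lt (div_pos hbpos ha)
        have hu1 : u ≤ 1 := by rw [hu]; exact div_le_one_of_le₀ hba ha.le
        set γ : ℝ := a^2 / b with hγ
        have hγ0 : 0 ≤ γ := by positivity
        have hγc : γ ≤ c := by rw [hγ]; exact div_le_of_le_mul₀ hbpos.le hc0 (by nlinarith)
        -- M = (1 - γ/c) • P + (γ/c) • Q
        have hM := hS memP (memQ u hu0 hu1)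
          (by
            have : γ / c ≤ 1 := div_le_one_of_le₀ hγc hc0
            linarith : (0:ℝ) ≤ 1 - γ / c)
          (by positivity : (0:ℝ) ≤ γ / c) (by ring)
        have hfin := hS memO hM (by linarith : (0:ℝ) ≤ 1 - c) hc0 (by ring)
        have heq : ((a:ℝ), b, c) = (1 - c) • ((0:ℝ), 0, 0) +
            c • ((1 - γ / c) • ((0:ℝ), 0, 1) + (γ / c) • ((u:ℝ), u^2, 1)) := by
          have hane : a ≠ 0 := ne_of_gt ha
          have hbne : b ≠ 0 := ne_of_gt hbpos
          have hcne : c ≠ 0 := ne_of_gt hc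
          simp only [Prod.smul_def, Prod.mk_add_mk, smul_eq_mul, Prod.ext_iff, hu, hγ]
          refine ⟨?_, ?_, ?_⟩ <;> field_simp <;> ring
        rw [heq]; exact hfin
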